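/- arXiv:2301.12513 — 3 statements merged into one kernel-verified Lean document; each statement's English description precedes it below -/
import Mathlib

section
/- For every d ∈ ℕ there exist k ∈ ℕ, a unit vector ψ ∈ ℝ^k and an n-tuple X of k×k real symmetric matrices such that the real symmetric matrix indexed by words u, w ∈ ⟨x⟩ of length at most d, with (u,w)-entry ⟨u(X)·w(X)ᵀ ψ, ψ⟩, is positive definite. -/
open scoped BigOperators Matrix Kronecker

namespace StatePoly

/-! ### Words and symmetrized words -/

/-- Words in the letters `x_1, …, x_n`: the free monoid on `Fin n`. -/
abbrev Word (n : ℕ) := FreeMonoid (Fin n)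

/-- The word reversal (the involution `⋆` on words). -/
def wordRev {n : ℕ} (w : Word n) : Word n := FreeMonoid.reverse w

/-- Two nonempty words are identified iff they are equal or reverses of each other;
this realizes the relation `ς(w) = ς(w⋆)`. -/
def wordSetoid (n : ℕ) : Setoid {l : List (Fin n) // l ≠ []} where
  r u v := u.1 = v.1 ∨ u.1 = v.1.reverse
  iseqv := by
    constructor
    · intro u; exact Or.inl rfl
    · rintro u v (h | h)
      · exact Or.inl h.symm
      · right; rw [h, List.reverse_reverse]
    · rintro u v w (h1 | h1) (h2 | h2)
      · exact Or.inl (h1.trans h2)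
      · right; rw [h1, h2]
      · right; rw [h1, h2]
      · left; rw [h1, h2, List.reverse_reverse]

/-- Symbols `ς(w)`, `w` a nonempty word, modulo `ς(w) = ς(w⋆)`. -/
def SW (n : ℕ) := Quotient (wordSetoid n)

/-- The commutative algebra `𝒮` of state polynomials:
a polynomial ring in the symbols `ς(w)`. -/
abbrev SPoly (n : ℕ) := MvPolynomial (SW n) ℝ

/-- The algebra `𝐒 = 𝒮 ⊗ ℝ⟨x⟩` of nc state polynomials, realized as the monoid algebra
of the free monoid over the polynomial ring `𝒮`. -/
abbrev NCSPoly (n : ℕ) := MonoidAlgebra (SPoly n) (Word n)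

variable {n : ℕ}

/-- The state symbol `ς(w)` of a word, with `ς(1) = 1`. -/
noncomputable def sigWordL (l : List (Fin n)) : SPoly n :=
  if h : l = [] then 1 else MvPolynomial.X (Quotient.mk (wordSetoid n) ⟨l, h⟩)

/-- The unital `𝒮`-linear map `ς : 𝐒 → 𝒮`. -/
noncomputable def sig (f : NCSPoly n) : SPoly n :=
  Finsupp.sum f.coeff fun w c => c * sigWordL (FreeMonoid.toList w)

/-- The involution `⋆` on `𝐒`: it fixes `𝒮 ∪ {x_1, …, x_n}` pointwise and reverses words. -/
noncomputable def ncStar (f : NCSPoly n) : NCSPoly n :=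
  MonoidAlgebra.ofCoeff (Finsupp.mapDomain wordRev f.coeff)

/-- The embedding `𝒮 ⊆ 𝐒`. -/
noncomputable def iotaS (p : SPoly n) : NCSPoly n := MonoidAlgebra.single 1 p

/-- The variable `x_i` as an nc state polynomial. -/
noncomputable def ncX (i : Fin n) : NCSPoly n := MonoidAlgebra.single (FreeMonoid.of i) 1

/-- A real constant as an nc state polynomial. -/
noncomputable def ncConst (r : ℝ) : NCSPoly n := iotaS (MvPolynomial.C r)

/-- `f ∈ 𝐒` lies in the free algebra `ℝ⟨x⟩ ⊆ 𝐒` iff all its coefficients are real constants. -/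
def IsFreePoly (f : NCSPoly n) : Prop := ∀ w : Word n, ∃ r : ℝ, f.coeff w = MvPolynomial.C r

/-! ### Degrees -/

/-- `|w|` on symmetrized words. -/
def swDeg : SW n → ℕ :=
  Quotient.lift (fun l : {l : List (Fin n) // l ≠ []} => l.1.length)
    (by rintro u v (h | h) <;> simp [h])

/-- The degree of a monomial `∏ ς(u_j)^{e_j}`, namely `∑ e_j |u_j|`. -/
def monoWeight (m : SW n →₀ ℕ) : ℕ := m.sum fun q e => e * swDeg q

/-- The degree of a state polynomial. -/
noncomputable def sDeg (p : SPoly n) : ℕ := p.support.sup monoWeight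

/-- The degree of an nc state polynomial: the maximum over the `𝐒`-words appearing in it of
`deg ς(u_1)⋯ς(u_m)v = |v| + ∑_j |u_j|`. -/
noncomputable def ncDeg (f : NCSPoly n) : ℕ :=
  (Finsupp.support f.coeff).sup fun w => sDeg (f.coeff w) + (FreeMonoid.toList w).length

lemma sDeg_zero : sDeg (0 : SPoly n) = 0 := by
  simp [sDeg, MvPolynomial.support_zero]

lemma sDeg_add_le (p q : SPoly n) : sDeg (p + q) ≤ max (sDeg p) (sDeg q) := by
  classical
  refine Finset.sup_le fun m hm => ?_
  rcases Finset.mem_union.mp (MvPolynomial.support_add hm) with h | h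
  · exact le_max_of_le_left (Finset.le_sup h)
  · exact le_max_of_le_right (Finset.le_sup h)

lemma sDeg_smul_le (c : ℝ) (p : SPoly n) : sDeg (c • p) ≤ sDeg p :=
  Finset.sup_le fun _m hm => Finset.le_sup (MvPolynomial.support_smul hm)

lemma sDeg_one : sDeg (1 : SPoly n) = 0 := by
  classical
  refine le_antisymm (Finset.sup_le fun m hm => ?_) (Nat.zero_le _)
  have : m = 0 := by
    by_contra h
    have := MvPolynomial.mem_support_iff.mp hm
    rw [MvPolynomial.coeff_one, if_neg (fun he => h he.symm)] at this
    exact this rfl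
  subst this
  simp [monoWeight]

/-- The subspace `𝒮_{k}` of state polynomials of degree at most `k`. -/
noncomputable def SPolyLe (n k : ℕ) : Submodule ℝ (SPoly n) where
  carrier := {p | sDeg p ≤ k}
  add_mem' := fun {p q} hp hq =>
    le_trans (sDeg_add_le p q) (max_le hp hq)
  zero_mem' := by simp [Set.mem_setOf_eq, sDeg_zero]
  smul_mem' := fun c p hp => le_trans (sDeg_smul_le c p) hp

lemma one_mem_SPolyLe (k : ℕ) : (1 : SPoly n) ∈ SPolyLe n k := by
  show sDeg (1 : SPoly n) ≤ k
  simp [sDeg_one]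

/-- Extension by zero of a linear functional on `𝒮_{k}` to `𝒮`
(used to refer to values of truncated functionals). -/
noncomputable def lext {n k : ℕ} (L : SPolyLe n k →ₗ[ℝ] ℝ) (p : SPoly n) : ℝ :=
  if h : sDeg p ≤ k then L ⟨p, h⟩ else 0

/-! ### Evaluations -/

section Eval

variable {A : Type*} [Ring A] [Module ℝ A]

/-- Evaluation of a word at a tuple `X`. -/
noncomputable def wEvalL (X : Fin n → A) (l : List (Fin n)) : A := (l.map X).prod

/-- The value assigned to the symbol `ς(w)`: `λ(w(X))`. -/
noncomputable def stVal (lam : A → ℝ) (X : Fin n → A) (q : SW n) : ℝ :=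
  lam (wEvalL X (Quotient.out q).1)

/-- Evaluation `a(λ; X) ∈ ℝ` of a state polynomial. -/
noncomputable def sEval (lam : A → ℝ) (X : Fin n → A) (p : SPoly n) : ℝ :=
  MvPolynomial.eval (stVal lam X) p

/-- Evaluation `f(λ; X) ∈ A` of an nc state polynomial. -/
noncomputable def ncEval (lam : A → ℝ) (X : Fin n → A) (f : NCSPoly n) : A :=
  Finsupp.sum f.coeff fun w c => sEval lam X c • wEvalL X (FreeMonoid.toList w)

end Eval

/-! ### States on matrix algebras -/

/-- A density matrix: positive semidefinite with trace 1. -/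
def IsDensity {k : ℕ} (ρ : Matrix (Fin k) (Fin k) ℝ) : Prop :=
  ρ.PosSemidef ∧ ρ.trace = 1

/-- The state on `k×k` matrices induced by a density matrix. -/
noncomputable def matState {k : ℕ} (ρ : Matrix (Fin k) (Fin k) ℝ) :
    Matrix (Fin k) (Fin k) ℝ → ℝ := fun Y => (ρ * Y).trace

/-- The vector state on `k×k` matrices induced by a vector `ψ`. -/
noncomputable def vecStateM {k : ℕ} (ψ : Fin k → ℝ) :
    Matrix (Fin k) (Fin k) ℝ → ℝ := fun Y => ψ ⬝ᵥ Y.mulVec ψ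

/-! ### States on B(H) -/

section Op

variable (H : Type*) [NormedAddCommGroup H] [InnerProductSpace ℝ H] [CompleteSpace H]

/-- A state on `B(H)`: a unital positive `⋆`-linear functional. -/
def IsState (lam : (H →L[ℝ] H) →ₗ[ℝ] ℝ) : Prop :=
  lam 1 = 1 ∧ (∀ Y : H →L[ℝ] H, lam (ContinuousLinearMap.adjoint Y) = lam Y) ∧
    ∀ Y : H →L[ℝ] H, 0 ≤ lam (Y * ContinuousLinearMap.adjoint Y)

/-- A vector state on `B(H)`. -/
def IsVecState (lam : (H →L[ℝ] H) →ₗ[ℝ] ℝ) : Prop :=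
  ∃ v : H, ‖v‖ = 1 ∧ ∀ Y : H →L[ℝ] H, lam Y = inner ℝ (Y v) v

/-- The state semialgebraic set `𝒟_C^∞` determined by the constraint set `C ⊆ 𝐒`. -/
def DCinf (C : Set (NCSPoly n)) :
    Set ((((H →L[ℝ] H) →ₗ[ℝ] ℝ)) × (Fin n → (H →L[ℝ] H))) :=
  {p | IsState H p.1 ∧ (∀ i, ContinuousLinearMap.adjoint (p.2 i) = p.2 i) ∧
    ∀ c ∈ C, (ncEval (⇑p.1) p.2 c).IsPositive}

/-- The subset `vec-𝒟_C^∞` of `𝒟_C^∞` in which the state is a vector state. -/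
def vecDCinf (C : Set (NCSPoly n)) :
    Set ((((H →L[ℝ] H) →ₗ[ℝ] ℝ)) × (Fin n → (H →L[ℝ] H))) :=
  {p ∈ DCinf H C | IsVecState H p.1}

end Op

/-! ### Positivity structures -/

/-- `Ω`: sums of products of elements `ς(h h⋆)`, `h ∈ 𝐒`. -/
def Omega (n : ℕ) : Set (SPoly n) :=
  {x | ∃ (m : ℕ) (g : Fin m → SPoly n),
    (∀ i, ∃ (mi : ℕ) (h : Fin mi → NCSPoly n), g i = ∏ j, sig (h j * ncStar (h j))) ∧
    x = ∑ i, g i}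

/-- Membership in the smallest subset of `𝒮` containing `{1} ∪ S` that is closed under
addition and under multiplication by squares of elements of `A`. -/
inductive QMemIn (A S : Set (SPoly n)) : SPoly n → Prop
  | base {s : SPoly n} : s ∈ insert (1 : SPoly n) S → QMemIn A S s
  | add {p q : SPoly n} : QMemIn A S p → QMemIn A S q → QMemIn A S (p + q)
  | mul_sq {a p : SPoly n} : a ∈ A → QMemIn A S p → QMemIn A S (a ^ 2 * p)

/-- The quadratic module generated by `S` in `𝒮`. -/
def QM (S : Set (SPoly n)) : Set (SPoly n) := {x | QMemIn Set.univ S x}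

/-- The set `C^ς = {ς(p c p⋆) : p ∈ ℝ⟨x⟩, c ∈ {1} ∪ C}`. -/
def Csig (C : Set (NCSPoly n)) : Set (SPoly n) :=
  {x | ∃ p : NCSPoly n, IsFreePoly p ∧ ∃ c ∈ insert (1 : NCSPoly n) C,
    x = sig (p * c * ncStar p)}

/-- A balanced constraint set: closed under `⋆`, and non-symmetric elements come in `±` pairs. -/
def Balanced (C : Set (NCSPoly n)) : Prop :=
  (∀ c ∈ C, ncStar c ∈ C) ∧ ∀ c ∈ C, c ≠ ncStar c → -c ∈ C

/-- An algebraically bounded constraint set: `N - x_1^2 - ⋯ - x_n^2 = ∑ p_i c_i p_i⋆` with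
`c_i ∈ {1} ∪ C ∩ ℝ⟨x⟩` and `p_i ∈ ℝ⟨x⟩`. -/
def AlgBounded (C : Set (NCSPoly n)) : Prop :=
  ∃ N : ℝ, 0 < N ∧ ∃ (m : ℕ) (p c : Fin m → NCSPoly n),
    (∀ i, IsFreePoly (p i)) ∧
    (∀ i, c i = 1 ∨ (c i ∈ C ∧ IsFreePoly (c i))) ∧
    ncConst N - ∑ j : Fin n, ncX j ^ 2 = ∑ i, p i * c i * ncStar (p i)

/-- The truncated quadratic module `M(C)_d`. -/
def MCd (C : Set (NCSPoly n)) (d : ℕ) : Set (SPoly n) :=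
  {x | ∃ (K : ℕ) (f c : Fin K → NCSPoly n),
    (∀ i, c i ∈ insert (1 : NCSPoly n) C) ∧
    (∀ i, ncDeg (f i * c i * ncStar (f i)) ≤ 2 * d) ∧
    x = ∑ i, sig (f i * c i * ncStar (f i))}

end StatePoly

namespace StatePoly

/-- Words of length at most `d` over `Fin n`, enumerated as pairs of a length `j ≤ d`
and a function `Fin j → Fin n` (so that the index type is a `Fintype`). -/
abbrev WordIdx (n d : ℕ) := (j : Fin (d + 1)) × (Fin (j : ℕ) → Fin n)

/-- The word corresponding to an index. -/
def wordOfIdx {n d : ℕ} (u : WordIdx n d) : List (Fin n) := List.ofFn u.2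

/-! The Hankel matrix is the Gram matrix of the vectors `u⋆(X) ψ`, `u ∈ ⟨x⟩_d`. Take for `ℝ^k`
the full Fock space truncated at length `d`, with basis `e_w`, `|w| ≤ d`, for `ψ` the vacuum `e_∅`,
and for `X_i` the creation operator `e_w ↦ e_{x_i w}` plus its transpose. Then
`w(X) e_∅ = e_w + (terms of shorter words)`, so these vectors are linearly independent. -/

lemma wordOfIdx_length_le {d : ℕ} (u : WordIdx n d) : (wordOfIdx u).length ≤ d := by
  simpa [wordOfIdx] using Nat.lt_succ_iff.mp u.1.isLt

lemma wordOfIdx_injective {d : ℕ} : Function.Injective (wordOfIdx (n := n) (d := d)) := by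
  rintro ⟨j, f⟩ ⟨j', f'⟩ h
  obtain rfl : j = j' := Fin.ext (by simpa [wordOfIdx] using congrArg List.length h)
  obtain rfl : f = f' := List.ofFn_injective h
  rfl

lemma exists_wordOfIdx_eq {d : ℕ} (l : List (Fin n)) (hl : l.length ≤ d) :
    ∃ u : WordIdx n d, wordOfIdx u = l :=
  ⟨⟨⟨l.length, Nat.lt_succ_of_le hl⟩, l.get⟩, List.ofFn_get l⟩

lemma wEvalL_cons {A : Type*} [Ring A] [Module ℝ A] (X : Fin n → A) (i : Fin n)
    (l : List (Fin n)) : wEvalL X (i :: l) = X i * wEvalL X l := by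
  simp [wEvalL]

lemma transpose_wEvalL {ι : Type*} [Fintype ι] [DecidableEq ι]
    {X : Fin n → Matrix ι ι ℝ} (hX : ∀ i, (X i).IsSymm) (l : List (Fin n)) :
    (wEvalL X l)ᵀ = wEvalL X l.reverse := by
  induction l with
  | nil => simp [wEvalL]
  | cons i l ih =>
    rw [wEvalL_cons, Matrix.transpose_mul, ih, (hX i).eq]
    simp [wEvalL]

/-! The basis vector `e_a` of `ℝ^ι` is labelled by the word `W a`; in the application `W` is a
bijection onto the words of length at most `d`, making `ℝ^ι` a truncated full Fock space. -/

section Fock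

variable {ι : Type*} (W : ι → List (Fin n))

def fockVacuum : ι → ℝ := fun a => if W a = [] then 1 else 0

/-- The field operator `x_i ↦ S_i + S_iᵀ`, where the creation operator `S_i` sends `e_w` to
`e_{i w}` (or to `0` if `i w` has no label). -/
def fockField (i : Fin n) : Matrix ι ι ℝ :=
  Matrix.of fun a b => (if W a = i :: W b then 1 else 0) + (if W b = i :: W a then 1 else 0)

lemma fockField_isSymm (i : Fin n) : (fockField W i).IsSymm :=
  Matrix.ext fun _ _ => add_comm _ _

lemma fockField_mulVec_apply [Fintype ι] (i : Fin n) (v : ι → ℝ) (a : ι) :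
    (fockField W i *ᵥ v) a =
      (∑ b, if W a = i :: W b then v b else 0) + ∑ b, if W b = i :: W a then v b else 0 := by
  simp only [Matrix.mulVec, dotProduct, fockField, Matrix.of_apply, add_mul, ite_mul, one_mul,
    zero_mul, Finset.sum_add_distrib]

lemma fockVacuum_dotProduct_self [Fintype ι] (hW : Function.Injective W) (hnil : ∃ a, W a = []) :
    fockVacuum W ⬝ᵥ fockVacuum W = 1 := by
  obtain ⟨a₀, ha₀⟩ := hnil
  rw [dotProduct, Finset.sum_eq_single a₀]
  · simp [fockVacuum, ha₀]
  · intro a _ ha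
    have hna : W a ≠ [] := fun h => ha (hW (h.trans ha₀.symm))
    simp [fockVacuum, hna]
  · simp

/-- `v = e_l + (a combination of basis vectors labelled by words shorter than l)`. -/
def HasLeadingWord (l : List (Fin n)) (v : ι → ℝ) : Prop :=
  ∀ a, l.length ≤ (W a).length → v a = if W a = l then 1 else 0

lemma hasLeadingWord_fockVacuum : HasLeadingWord W [] (fockVacuum W) :=
  fun _ _ => rfl

/-- Only the creation part of `x_i` can reach `e_{i l}`; the annihilation part lowers lengths. -/
lemma HasLeadingWord.fockField_mulVec [Fintype ι] (hW : Function.Injective W) {l : List (Fin n)}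
    {v : ι → ℝ} (hv : HasLeadingWord W l v) (hl : ∃ b, W b = l) (i : Fin n) :
    HasLeadingWord W (i :: l) (fockField W i *ᵥ v) := by
  intro a ha
  simp only [List.length_cons] at ha
  have hannihilation : (∑ b, if W b = i :: W a then v b else 0) = 0 := by
    refine Finset.sum_eq_zero fun b _ => ?_
    split_ifs with hb
    · have hlen : (W b).length = (W a).length + 1 := by simp [hb]
      rw [hv b (by omega), if_neg (fun h => by simp [h] at hlen; omega)]
    · rfl
  rw [fockField_mulVec_apply, hannihilation, add_zero]
  obtain ⟨b₀, hb₀⟩ := hl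
  split_ifs with hal
  · rw [Finset.sum_eq_single b₀ (fun b _ hb => if_neg fun h =>
      hb (hW ((List.cons_injective (h.symm.trans hal)).trans hb₀.symm)))
      (by simp), if_pos (by rw [hal, hb₀]), hv b₀ (by rw [hb₀]), if_pos hb₀]
  · refine Finset.sum_eq_zero fun b _ => ?_
    split_ifs with hb
    · have hlen : (W a).length = (W b).length + 1 := by simp [hb]
      rw [hv b (by omega), if_neg (fun h => hal (by rw [hb, h]))]
    · rfl

lemma hasLeadingWord_wEvalL_mulVec_fockVacuum [Fintype ι] [DecidableEq ι]
    (hW : Function.Injective W) {d : ℕ}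
    (hsurj : ∀ l : List (Fin n), l.length ≤ d → ∃ a, W a = l) (l : List (Fin n))
    (hl : l.length ≤ d) :
    HasLeadingWord W l (wEvalL (fockField W) l *ᵥ fockVacuum W) := by
  induction l with
  | nil => simpa [wEvalL] using hasLeadingWord_fockVacuum W
  | cons i l ih =>
    simp only [List.length_cons] at hl
    rw [wEvalL_cons, ← Matrix.mulVec_mulVec]
    exact (ih (by omega)).fockField_mulVec W hW (hsurj l (by omega)) i

/-- Vectors with distinct leading words are linearly independent: in a vanishing combination,
the coordinate at the longest leading word with nonzero coefficient sees only that coefficient. -/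
lemma linearIndependent_of_hasLeadingWord {κ : Type*} [Fintype κ] {L : κ → List (Fin n)}
    (hL : Function.Injective L) (hlabel : ∀ u, ∃ a, W a = L u) {V : κ → ι → ℝ}
    (hV : ∀ u, HasLeadingWord W (L u) (V u)) : LinearIndependent ℝ V := by
  classical
  rw [Fintype.linearIndependent_iff]
  intro g hg
  by_contra! hne
  obtain ⟨u₀, hu₀, hmax⟩ := Finset.exists_max_image {u | g u ≠ 0} (fun u => (L u).length)
    (by simpa [Finset.Nonempty] using hne)
  obtain ⟨a₀, ha₀⟩ := hlabel u₀
  have hcoord : (∑ u, g u • V u) a₀ = g u₀ := by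
    rw [Finset.sum_apply, Finset.sum_eq_single u₀]
    · simp [hV u₀ a₀ (by rw [ha₀]), ha₀]
    · intro u _ hu
      by_cases hgu : g u = 0
      · simp [hgu]
      · rw [Pi.smul_apply, hV u a₀ (by simpa [ha₀] using hmax u (by simpa using hgu)),
          if_neg (fun h => hu (hL (h.symm.trans ha₀))), smul_zero]
    · simp
  exact (Finset.mem_filter.mp hu₀).2 (by rw [← hcoord, hg, Pi.zero_apply])

end Fock

lemma dotProduct_mul_transpose_mulVec {ι : Type*} [Fintype ι] (A B : Matrix ι ι ℝ)
    (ψ : ι → ℝ) : ψ ⬝ᵥ (A * Bᵀ) *ᵥ ψ = (Aᵀ *ᵥ ψ) ⬝ᵥ (Bᵀ *ᵥ ψ) := by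
  rw [← Matrix.mulVec_mulVec, Matrix.dotProduct_mulVec, Matrix.mulVec_transpose A]

theorem statement_3_general (n : ℕ) (d : ℕ) :
    ∃ (k : ℕ) (ψ : Fin k → ℝ) (X : Fin n → Matrix (Fin k) (Fin k) ℝ),
      ψ ⬝ᵥ ψ = 1 ∧ (∀ i, (X i).IsSymm) ∧
      Matrix.PosDef (Matrix.of fun (u w : WordIdx n d) =>
        ψ ⬝ᵥ (wEvalL X (wordOfIdx u) * (wEvalL X (wordOfIdx w))ᵀ).mulVec ψ) := by
  set e := Fintype.equivFin (WordIdx n d)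
  set W : Fin (Fintype.card (WordIdx n d)) → List (Fin n) := fun a => wordOfIdx (e.symm a)
  have hW : Function.Injective W := wordOfIdx_injective.comp e.symm.injective
  have hsurj (l : List (Fin n)) (hl : l.length ≤ d) : ∃ a, W a = l := by
    obtain ⟨u, rfl⟩ := exists_wordOfIdx_eq l hl
    exact ⟨e u, by simp [W]⟩
  have hsymm := fockField_isSymm W
  refine ⟨_, fockVacuum W, fockField W, fockVacuum_dotProduct_self W hW (hsurj [] d.zero_le),
    hsymm, ?_⟩
  set V : WordIdx n d → EuclideanSpace ℝ (Fin _) := fun u =>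
    WithLp.toLp 2 (wEvalL (fockField W) (wordOfIdx u).reverse *ᵥ fockVacuum W)
  have hgram : Matrix.of (fun u w : WordIdx n d => fockVacuum W ⬝ᵥ
      (wEvalL (fockField W) (wordOfIdx u) * (wEvalL (fockField W) (wordOfIdx w))ᵀ) *ᵥ
        fockVacuum W) = Matrix.gram ℝ V := by
    ext u w
    rw [Matrix.of_apply, Matrix.gram_apply, dotProduct_mul_transpose_mulVec,
      transpose_wEvalL hsymm, transpose_wEvalL hsymm, EuclideanSpace.inner_eq_star_dotProduct]
    simp [V, dotProduct_comm]
  have hli : LinearIndependent ℝ fun u : WordIdx n d =>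
      wEvalL (fockField W) (wordOfIdx u).reverse *ᵥ fockVacuum W :=
    linearIndependent_of_hasLeadingWord W (List.reverse_injective.comp wordOfIdx_injective)
      (fun u => hsurj _ (by simpa using wordOfIdx_length_le u))
      (fun u => hasLeadingWord_wEvalL_mulVec_fockVacuum W hW hsurj _
        (by simpa using wordOfIdx_length_le u))
  rw [hgram]
  exact Matrix.posDef_gram_of_linearIndependent
    (hli.map' (WithLp.linearEquiv 2 ℝ (Fin _ → ℝ)).symm.toLinearMap
      (WithLp.linearEquiv 2 ℝ _).symm.ker)

/-- Lemma `l:pd`.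
For every `d` there exist `k`, a unit vector `ψ ∈ ℝ^k` and a tuple `X` of `k×k` real
symmetric matrices such that the evaluation of the formal Hankel matrix
`H_d = (ς(u w⋆))_{u,w ∈ ⟨x⟩_d}` at the vector state `λ(Y) = ⟨Yψ, ψ⟩` and the tuple `X`,
i.e. the matrix with `(u,w)`-entry `⟨u(X)·w(X)ᵀ ψ, ψ⟩`, is positive definite. -/
theorem statement_3 (n : ℕ) (hn : 1 ≤ n) (d : ℕ) :
    ∃ (k : ℕ) (ψ : Fin k → ℝ) (X : Fin n → Matrix (Fin k) (Fin k) ℝ),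
      ψ ⬝ᵥ ψ = 1 ∧ (∀ i, (X i).IsSymm) ∧
      Matrix.PosDef (Matrix.of fun (u w : WordIdx n d) =>
        ψ ⬝ᵥ (wEvalL X (wordOfIdx u) * (wEvalL X (wordOfIdx w))ᵀ).mulVec ψ) :=
  statement_3_general n d

end StatePoly
end

section
/- Let L : ℝ⟨x⟩ → ℝ be a unital ⋆-functional, i.e., a linear map with L(1) = 1 and L(p⋆) = L(p) for all p. If (a) L(pp⋆) ≥ 0 for all p ∈ ℝ⟨x⟩, and (b) there is N > 0 such that L(p(N − x_1² − ⋯ − x_n²)p⋆) ≥ 0 for all p ∈ ℝ⟨x⟩, then there exist a separable real Hilbert space H, a unit vector v ∈ H, and an n-tuple X of bounded self-adjoint operators on H such that L(p) = ⟨p(X)v, v⟩ for all p ∈ ℝ⟨x⟩. -/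
open scoped BigOperators Matrix Kronecker

namespace StatePoly

/-- A bundled real Hilbert space. -/
structure RealHilbertSpace where
  carrier : Type
  [nacg : NormedAddCommGroup carrier]
  [ips : InnerProductSpace ℝ carrier]
  [complete : CompleteSpace carrier]

attribute [instance] RealHilbertSpace.nacg RealHilbertSpace.ips RealHilbertSpace.complete

/-- The free algebra `ℝ⟨x⟩` on `n` symmetric variables, as a monoid algebra. -/
abbrev FreeNC (n : ℕ) := MonoidAlgebra ℝ (Word n)

/-- The involution `⋆` on `ℝ⟨x⟩`, fixing `ℝ ∪ {x_1,…,x_n}` and reversing words. -/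
noncomputable def freeStar {n : ℕ} (f : FreeNC n) : FreeNC n := MonoidAlgebra.ofCoeff (Finsupp.mapDomain wordRev f.coeff)

/-- The variable `x_i ∈ ℝ⟨x⟩`. -/
noncomputable def fX {n : ℕ} (i : Fin n) : FreeNC n := MonoidAlgebra.single (FreeMonoid.of i) 1

/-- Evaluation of `p ∈ ℝ⟨x⟩` at a tuple `X`, substituting `X_j` for `x_j`. -/
noncomputable def fEval {n : ℕ} {A : Type*} [Ring A] [Module ℝ A]
    (X : Fin n → A) (p : FreeNC n) : A :=
  Finsupp.sum p.coeff fun w c => c • wEvalL X (FreeMonoid.toList w)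

end StatePoly

/-!
GNS construction. Since `L` is a positive `⋆`-functional, `⟨p, q⟩ := L(p q⋆)` is a positive
semidefinite symmetric form on `ℝ⟨x⟩`, and right multiplication by `x_i` is symmetric for it.
Condition (b) bounds these operators by `√N`: expanding `L(p (N − ∑ x_j²) p⋆) ≥ 0` gives
`L((p x_i)(p x_i)⋆) ≤ ∑_j L((p x_j)(p x_j)⋆) ≤ N L(p p⋆)`. They therefore extend to self-adjoint
operators `X_i` on the Hausdorff completion `H`, which is separable since `ℝ⟨x⟩` has a countable
basis. Writing `[p]` for the class of `p`, we get `w(X)[1] = [w⋆]` for every word `w`, hence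
`⟨p(X)[1], [1]⟩ = L(p⋆) = L(p)`.
-/

open scoped InnerProductSpace

abbrev HausdorffCompletion (V : Type*) [UniformSpace V] :=
  UniformSpace.Completion (SeparationQuotient V)

namespace HausdorffCompletion

variable {V : Type*} [SeminormedAddCommGroup V] [InnerProductSpace ℝ V]

noncomputable def toCLM : V →L[ℝ] HausdorffCompletion V :=
  UniformSpace.Completion.toComplL.comp (SeparationQuotient.mkCLM ℝ V)

@[simp]
lemma inner_toCLM (x y : V) : ⟪toCLM x, toCLM y⟫_ℝ = ⟪x, y⟫_ℝ := by
  change ⟪((SeparationQuotient.mk x : SeparationQuotient V) : HausdorffCompletion V),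
    (SeparationQuotient.mk y : SeparationQuotient V)⟫_ℝ = _
  rw [UniformSpace.Completion.inner_coe, SeparationQuotient.inner_mk_mk]

lemma denseRange_toCLM : DenseRange (toCLM : V →L[ℝ] HausdorffCompletion V) :=
  UniformSpace.Completion.denseRange_coe.comp SeparationQuotient.surjective_mk.denseRange
    (UniformSpace.Completion.continuous_coe _)

lemma isUniformInducing_toCLM : IsUniformInducing (toCLM : V →L[ℝ] HausdorffCompletion V) :=
  (UniformSpace.Completion.isUniformInducing_coe _).comp SeparationQuotient.isUniformInducing_mk

instance [TopologicalSpace.SeparableSpace V] :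
    TopologicalSpace.SeparableSpace (HausdorffCompletion V) :=
  denseRange_toCLM.separableSpace toCLM.continuous

noncomputable def map (T : V →L[ℝ] V) : HausdorffCompletion V →L[ℝ] HausdorffCompletion V :=
  (toCLM.comp T).extend toCLM

@[simp]
lemma map_toCLM (T : V →L[ℝ] V) (x : V) : map T (toCLM x) = toCLM (T x) :=
  ContinuousLinearMap.extend_eq _ denseRange_toCLM isUniformInducing_toCLM x

lemma adjoint_map {T : V →L[ℝ] V} (hT : ∀ x y, ⟪T x, y⟫_ℝ = ⟪x, T y⟫_ℝ) :
    ContinuousLinearMap.adjoint (map T) = map T := by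
  refine ((ContinuousLinearMap.eq_adjoint_iff _ _).mpr fun x y => ?_).symm
  refine denseRange_toCLM.induction_on₂ (p := fun x y => ⟪map T x, y⟫_ℝ = ⟪x, map T y⟫_ℝ)
    (isClosed_eq ?_ ?_) (fun a b => ?_) x y
  · fun_prop
  · fun_prop
  · simp only [map_toCLM, inner_toCLM, hT]

end HausdorffCompletion

namespace StatePoly

theorem exists_hilbertSpace_of_preInnerProductCore {V : Type} [AddCommGroup V] [Module ℝ V]
    (c : PreInnerProductSpace.Core ℝ V) {s : Set V} (hs : s.Countable)
    (hspan : Submodule.span ℝ s = ⊤) {ι : Type*} (T : ι → V →ₗ[ℝ] V) (C : ℝ)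
    (hbound : ∀ i x, c.inner (T i x) (T i x) ≤ C * c.inner x x)
    (hsymm : ∀ i x y, c.inner (T i x) y = c.inner x (T i y)) :
    ∃ H : RealHilbertSpace, TopologicalSpace.SeparableSpace H.carrier ∧
      ∃ (e : V →ₗ[ℝ] H.carrier) (X : ι → H.carrier →L[ℝ] H.carrier),
        (∀ x y, ⟪e x, e y⟫_ℝ = c.inner x y) ∧ (∀ i, ContinuousLinearMap.adjoint (X i) = X i) ∧
        ∀ i x, X i (e x) = e (T i x) := by
  let _ : SeminormedAddCommGroup V := InnerProductSpace.Core.toSeminormedAddCommGroup (c := c)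
  let _ : InnerProductSpace ℝ V := InnerProductSpace.ofCore c
  have : TopologicalSpace.SeparableSpace V := by
    rw [← TopologicalSpace.isSeparable_univ_iff, ← Submodule.top_coe (R := ℝ), ← hspan]
    exact hs.isSeparable.span
  let Tc i : V →L[ℝ] V := (T i).mkContinuous (√C) fun x => by
    rw [norm_eq_sqrt_real_inner, norm_eq_sqrt_real_inner, ← Real.sqrt_mul' _ real_inner_self_nonneg]
    exact Real.sqrt_le_sqrt (hbound i x)
  exact ⟨⟨HausdorffCompletion V⟩, inferInstance, HausdorffCompletion.toCLM.toLinearMap,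
    fun i => HausdorffCompletion.map (Tc i), HausdorffCompletion.inner_toCLM,
    fun i => HausdorffCompletion.adjoint_map (hsymm i),
    fun i => HausdorffCompletion.map_toCLM (Tc i)⟩

variable {n : ℕ}

lemma freeStar_eq_mapDomainLinearMap (p : FreeNC n) :
    freeStar p = MonoidAlgebra.mapDomainLinearMap ℝ ℝ wordRev p := rfl

lemma freeStar_single (w : Word n) (r : ℝ) :
    freeStar (MonoidAlgebra.single w r) = MonoidAlgebra.single (wordRev w) r := by
  simp [freeStar_eq_mapDomainLinearMap]

lemma freeStar_add (p q : FreeNC n) : freeStar (p + q) = freeStar p + freeStar q :=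
  map_add (MonoidAlgebra.mapDomainLinearMap ℝ ℝ wordRev) p q

lemma freeStar_one : freeStar (1 : FreeNC n) = 1 := by
  rw [MonoidAlgebra.one_def, freeStar_single]; rfl

lemma freeStar_fX (i : Fin n) : freeStar (fX i) = fX i := by
  rw [fX, freeStar_single]; rfl

lemma freeStar_mul (p q : FreeNC n) : freeStar (p * q) = freeStar q * freeStar p := by
  induction p using MonoidAlgebra.induction_linear with
  | zero => simp [freeStar_eq_mapDomainLinearMap]
  | add f g hf hg => rw [add_mul, freeStar_add, hf, hg, freeStar_add, mul_add]
  | single a r =>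
    induction q using MonoidAlgebra.induction_linear with
    | zero => simp [freeStar_eq_mapDomainLinearMap]
    | add f g hf hg => rw [mul_add, freeStar_add, hf, hg, freeStar_add, add_mul]
    | single b s =>
      simp only [MonoidAlgebra.single_mul_single, freeStar_single, wordRev,
        FreeMonoid.reverse_mul, mul_comm r s]

lemma freeStar_freeStar (p : FreeNC n) : freeStar (freeStar p) = p := by
  induction p using MonoidAlgebra.induction_linear with
  | zero => simp [freeStar_eq_mapDomainLinearMap]
  | add f g hf hg => rw [freeStar_add, freeStar_add, hf, hg]
  | single a r => simp [freeStar_single, wordRev]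

lemma span_range_single_one :
    Submodule.span ℝ (Set.range fun w : Word n => (MonoidAlgebra.single w 1 : FreeNC n)) = ⊤ :=
  (MonoidAlgebra.basis (Word n) ℝ).span_eq

section Evaluation

variable {E : Type*} [NormedAddCommGroup E] [NormedSpace ℝ E] {X : Fin n → E →L[ℝ] E}
  {e : FreeNC n →ₗ[ℝ] E}

lemma wEvalL_apply_of_intertwines (he : ∀ i p, X i (e p) = e (p * fX i)) (l : List (Fin n))
    (p : FreeNC n) :
    wEvalL X l (e p) = e (p * MonoidAlgebra.single (wordRev (FreeMonoid.ofList l)) 1) := by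
  induction l generalizing p with
  | nil =>
    simp only [wEvalL, List.map_nil, List.prod_nil, one_apply_eq_self]
    exact congrArg e (mul_one p).symm
  | cons i l ih =>
    have hrev : wordRev (FreeMonoid.ofList (i :: l))
        = wordRev (FreeMonoid.ofList l) * FreeMonoid.of i :=
      (FreeMonoid.reverse_mul (a := FreeMonoid.of i) (b := FreeMonoid.ofList l) :)
    simp only [wEvalL, List.map_cons, List.prod_cons] at ih ⊢
    rw [mul_apply_eq_comp, ih, he, hrev, mul_assoc, fX,
      MonoidAlgebra.single_mul_single, mul_one]

lemma fEval_apply_of_intertwines (he : ∀ i p, X i (e p) = e (p * fX i)) (p : FreeNC n) :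
    fEval X p (e 1) = e (freeStar p) := by
  have hword (w : Word n) : wEvalL X w.toList (e 1) = e (MonoidAlgebra.single (wordRev w) 1) := by
    rw [wEvalL_apply_of_intertwines he, one_mul, FreeMonoid.ofList_toList]
  conv_rhs => rw [← p.sum_coeff_single]
  simp only [fEval, Finsupp.sum, sum_apply, smul_apply,
    hword, freeStar_eq_mapDomainLinearMap, map_sum, ← map_smul, MonoidAlgebra.smul_single',
    mul_one, MonoidAlgebra.mapDomainLinearMap_single]

end Evaluation

section GNS

variable (L : FreeNC n →ₗ[ℝ] ℝ)

lemma map_mul_freeStar_comm (hLstar : ∀ p, L (freeStar p) = L p) (p q : FreeNC n) :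
    L (p * freeStar q) = L (q * freeStar p) := by
  rw [← hLstar, freeStar_mul, freeStar_freeStar]

noncomputable abbrev gnsCore (hLstar : ∀ p, L (freeStar p) = L p)
    (hpos : ∀ p, 0 ≤ L (p * freeStar p)) : PreInnerProductSpace.Core ℝ (FreeNC n) where
  inner p q := L (p * freeStar q)
  conj_inner_symm p q := map_mul_freeStar_comm L hLstar q p
  re_inner_nonneg := hpos
  add_left p q r := by simp only [add_mul, map_add]
  smul_left p q r := by simp

lemma map_mul_fX_mul_freeStar_le (hpos : ∀ p, 0 ≤ L (p * freeStar p)) {N : ℝ}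
    (hN : ∀ p, 0 ≤ L (p * (algebraMap ℝ (FreeNC n) N - ∑ i : Fin n, fX i ^ 2) * freeStar p))
    (i : Fin n) (p : FreeNC n) :
    L (p * fX i * freeStar (p * fX i)) ≤ N * L (p * freeStar p) := by
  have hexpand : p * (algebraMap ℝ (FreeNC n) N - ∑ j : Fin n, fX j ^ 2) * freeStar p
      = N • (p * freeStar p) - ∑ j : Fin n, p * fX j * freeStar (p * fX j) := by
    simp only [mul_sub, sub_mul, Finset.mul_sum, Finset.sum_mul, Algebra.algebraMap_eq_smul_one,
      mul_smul_comm, smul_mul_assoc, mul_one, freeStar_mul, freeStar_fX, pow_two, mul_assoc]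
  have hsum : L (p * fX i * freeStar (p * fX i))
      ≤ ∑ j : Fin n, L (p * fX j * freeStar (p * fX j)) :=
    Finset.single_le_sum (fun j _ => hpos (p * fX j)) (Finset.mem_univ i)
  have := hN p
  rw [hexpand, map_sub, map_smul, map_sum, smul_eq_mul] at this
  linarith

end GNS

theorem statement_6_general (n : ℕ) (L : FreeNC n →ₗ[ℝ] ℝ)
    (hL1 : L 1 = 1) (hLstar : ∀ p : FreeNC n, L (freeStar p) = L p)
    (hpos : ∀ p : FreeNC n, 0 ≤ L (p * freeStar p))
    (hbdd : ∃ N : ℝ, 0 < N ∧ ∀ p : FreeNC n,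
      0 ≤ L (p * (algebraMap ℝ (FreeNC n) N - ∑ i : Fin n, fX i ^ 2) * freeStar p)) :
    ∃ (𝓗 : RealHilbertSpace), TopologicalSpace.SeparableSpace 𝓗.carrier ∧
      ∃ (v : 𝓗.carrier) (X : Fin n → 𝓗.carrier →L[ℝ] 𝓗.carrier),
        ‖v‖ = 1 ∧ (∀ i, ContinuousLinearMap.adjoint (X i) = X i) ∧
        ∀ p : FreeNC n, L p = inner ℝ (fEval X p v) v := by
  obtain ⟨N, -, hN⟩ := hbdd
  obtain ⟨H, hsep, e, X, he, hX, heX⟩ := exists_hilbertSpace_of_preInnerProductCore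
    (gnsCore L hLstar hpos) (Set.countable_range _) span_range_single_one
    (fun i => LinearMap.mulRight ℝ (fX i)) N (map_mul_fX_mul_freeStar_le L hpos hN)
    fun i p q => by
      show L (p * fX i * freeStar q) = L (p * freeStar (q * fX i))
      rw [freeStar_mul, freeStar_fX, mul_assoc]
  refine ⟨H, hsep, e 1, X, ?_, hX, fun p => ?_⟩
  · rw [norm_eq_sqrt_real_inner, he]
    show √(L (1 * freeStar 1)) = 1
    rw [freeStar_one, one_mul, hL1, Real.sqrt_one]
  · rw [fEval_apply_of_intertwines heX, he]
    show L p = L (freeStar p * freeStar 1)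
    rw [freeStar_one, mul_one, hLstar]

/-- Proposition `prop:moment`, a GNS-type construction.
Let `L : ℝ⟨x⟩ → ℝ` be a unital `⋆`-functional such that (a) `L(pp⋆) ≥ 0` for all `p`, and
(b) for some `N > 0`, `L(p(N − x₁² − ⋯ − xₙ²)p⋆) ≥ 0` for all `p`.  Then there exist a
separable real Hilbert space `H`, a unit vector `v ∈ H` and a tuple `X` of bounded
self-adjoint operators on `H` with `L(p) = ⟨p(X)v, v⟩` for all `p ∈ ℝ⟨x⟩`. -/
theorem statement_6 (n : ℕ) (hn : 1 ≤ n) (L : FreeNC n →ₗ[ℝ] ℝ)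
    (hL1 : L 1 = 1) (hLstar : ∀ p : FreeNC n, L (freeStar p) = L p)
    (hpos : ∀ p : FreeNC n, 0 ≤ L (p * freeStar p))
    (hbdd : ∃ N : ℝ, 0 < N ∧ ∀ p : FreeNC n,
      0 ≤ L (p * (algebraMap ℝ (FreeNC n) N - ∑ i : Fin n, fX i ^ 2) * freeStar p)) :
    ∃ (𝓗 : RealHilbertSpace), TopologicalSpace.SeparableSpace 𝓗.carrier ∧
      ∃ (v : 𝓗.carrier) (X : Fin n → 𝓗.carrier →L[ℝ] 𝓗.carrier),
        ‖v‖ = 1 ∧ (∀ i, ContinuousLinearMap.adjoint (X i) = X i) ∧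
        ∀ p : FreeNC n, L p = inner ℝ (fEval X p v) v :=
  statement_6_general n L hL1 hLstar hpos hbdd

end StatePoly
end

section
/- If C ⊆ 𝐒 is balanced and algebraically bounded, then the quadratic module QM(C^ς) ⊆ 𝒮 is archimedean: for every f ∈ 𝒮 there exists m > 0 such that m + f ∈ QM(C^ς) and m − f ∈ QM(C^ς). -/
open scoped BigOperators Matrix Kronecker

/-!
`QM(C^ς)` is archimedean as soon as every generator `ς(w)` of `𝒮` is bounded by it, because the
elements `f` with `m ± f ∈ QM(C^ς)` for some `m` form a subalgebra (for products one writes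
`m² - f² = ((m + f)²(m - f) + (m - f)²(m + f)) / 2m` and polarizes).

To bound `ς(w)`, conjugate the certificate `N - ∑ⱼ xⱼ² = ∑ᵢ pᵢ cᵢ pᵢ⋆` by a word `u` and apply `ς`:
this gives `N ς(u u⋆) - ∑ⱼ ς(u xⱼ xⱼ u⋆) ∈ QM(C^ς)`, and since every `ς(v v⋆)` lies in
`QM(C^ς)`, induction on `|w|` yields `N^|w| - ς(w w⋆) ∈ QM(C^ς)`. Then
`ς((1 ± w)(1 ± w)⋆) = 1 ± 2 ς(w) + ς(w w⋆)` bounds `ς(w)` on both sides.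
-/

namespace StatePoly

variable {n : ℕ}

open MvPolynomial

section QuadraticModule

variable {S : Set (SPoly n)}

theorem QM.subset {s : SPoly n} (h : s ∈ S) : s ∈ QM S :=
  QMemIn.base (Set.mem_insert_of_mem _ h)

theorem QM.one_mem : (1 : SPoly n) ∈ QM S :=
  QMemIn.base (Set.mem_insert _ _)

theorem QM.add_mem {p q : SPoly n} (hp : p ∈ QM S) (hq : q ∈ QM S) : p + q ∈ QM S :=
  QMemIn.add hp hq

theorem QM.sq_mul_mem (a : SPoly n) {p : SPoly n} (hp : p ∈ QM S) : a ^ 2 * p ∈ QM S :=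
  QMemIn.mul_sq (Set.mem_univ a) hp

theorem QM.sq_mem (a : SPoly n) : a ^ 2 ∈ QM S := by
  simpa using QM.sq_mul_mem a (QM.one_mem (S := S))

theorem QM.zero_mem : (0 : SPoly n) ∈ QM S := by
  simpa using QM.sq_mem (S := S) 0

theorem QM.sum_mem {ι : Type*} (s : Finset ι) {f : ι → SPoly n} (h : ∀ i ∈ s, f i ∈ QM S) :
    ∑ i ∈ s, f i ∈ QM S :=
  Finset.sum_induction f (· ∈ QM S) (fun _ _ => QM.add_mem) QM.zero_mem h

theorem QM.C_mul_mem {r : ℝ} (hr : 0 ≤ r) {p : SPoly n} (hp : p ∈ QM S) : C r * p ∈ QM S := by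
  simpa [← map_pow, Real.sq_sqrt hr] using QM.sq_mul_mem (C √r) hp

theorem QM.C_mem {r : ℝ} (hr : 0 ≤ r) : (C r : SPoly n) ∈ QM S := by
  simpa using QM.C_mul_mem hr (QM.one_mem (S := S))

end QuadraticModule

section Bounded

def QMBounded (S : Set (SPoly n)) (f : SPoly n) : Prop :=
  ∃ m : ℝ, 0 < m ∧ C m + f ∈ QM S ∧ C m - f ∈ QM S

variable {S : Set (SPoly n)}

theorem qmBounded_C (r : ℝ) : QMBounded S (C r) :=
  ⟨|r| + 1, by positivity, by rw [← map_add]; exact QM.C_mem (by linarith [neg_abs_le r]),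
    by rw [← map_sub]; exact QM.C_mem (by linarith [le_abs_self r])⟩

theorem QMBounded.neg {f : SPoly n} (hf : QMBounded S f) : QMBounded S (-f) := by
  obtain ⟨m, hm, hplus, hminus⟩ := hf
  exact ⟨m, hm, by rwa [← sub_eq_add_neg], by rwa [sub_neg_eq_add]⟩

theorem QMBounded.add {f g : SPoly n} (hf : QMBounded S f) (hg : QMBounded S g) :
    QMBounded S (f + g) := by
  obtain ⟨m, hm, hf₁, hf₂⟩ := hf
  obtain ⟨k, hk, hg₁, hg₂⟩ := hg
  refine ⟨m + k, by positivity, ?_, ?_⟩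
  · convert QM.add_mem hf₁ hg₁ using 1; rw [map_add]; ring
  · convert QM.add_mem hf₂ hg₂ using 1; rw [map_add]; ring

theorem QMBounded.C_mul {r : ℝ} (hr : 0 ≤ r) {f : SPoly n} (hf : QMBounded S f) :
    QMBounded S (C r * f) := by
  obtain ⟨m, hm, hplus, hminus⟩ := hf
  refine ⟨r * m + 1, by positivity, ?_, ?_⟩
  · convert QM.add_mem (QM.C_mul_mem hr hplus) QM.one_mem using 1
    simp only [map_add, map_mul, map_one]; ring
  · convert QM.add_mem (QM.C_mul_mem hr hminus) QM.one_mem using 1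
    simp only [map_add, map_mul, map_one]; ring

theorem QMBounded.sq {f : SPoly n} (hf : QMBounded S f) : QMBounded S (f ^ 2) := by
  obtain ⟨m, hm, hplus, hminus⟩ := hf
  refine ⟨m ^ 2 + 1, by positivity, QM.add_mem (QM.C_mem (by positivity)) (QM.sq_mem f), ?_⟩
  have key : C (2 * m) * (C (m ^ 2) - f ^ 2)
      = (C m + f) ^ 2 * (C m - f) + (C m - f) ^ 2 * (C m + f) := by
    simp only [map_mul, map_pow, map_ofNat]; ring
  have h := QM.C_mul_mem (inv_nonneg.2 (by positivity : (0 : ℝ) ≤ 2 * m))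
    (QM.add_mem (QM.sq_mul_mem (C m + f) hminus) (QM.sq_mul_mem (C m - f) hplus))
  rw [← key, ← mul_assoc, ← map_mul, inv_mul_cancel₀ (by positivity), map_one, one_mul] at h
  convert QM.add_mem h QM.one_mem using 1
  rw [map_add, map_one]; ring

theorem QMBounded.mul {f g : SPoly n} (hf : QMBounded S f) (hg : QMBounded S g) :
    QMBounded S (f * g) := by
  have h := ((hf.add hg).sq.add (hf.add hg.neg).sq.neg).C_mul (r := 4⁻¹) (by norm_num)
  have hC : (C (4⁻¹ : ℝ) : SPoly n) * 4 = 1 := by rw [← map_ofNat C 4, ← map_mul]; norm_num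
  convert h using 1
  linear_combination (-(f * g)) * hC

variable (S) in
def qmBoundedSubalgebra : Subalgebra ℝ (SPoly n) where
  carrier := {f | QMBounded S f}
  mul_mem' := QMBounded.mul
  add_mem' := QMBounded.add
  algebraMap_mem' := qmBounded_C

theorem qmBoundedSubalgebra_eq_top (hX : ∀ q, QMBounded S (X q)) :
    qmBoundedSubalgebra S = ⊤ := by
  rw [eq_top_iff, ← adjoin_range_X, Algebra.adjoin_le_iff]
  rintro _ ⟨q, rfl⟩
  exact hX q

end Bounded

section NCAlgebra

noncomputable def sigAddHom : NCSPoly n →+ SPoly n where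
  toFun := sig
  map_zero' := by unfold sig; rw [MonoidAlgebra.coeff_zero]; exact Finsupp.sum_zero_index
  map_add' f g := by
    unfold sig
    rw [MonoidAlgebra.coeff_add]
    exact Finsupp.sum_add_index' (fun _ => zero_mul _) (fun _ _ _ => add_mul _ _ _)

theorem sig_add (f g : NCSPoly n) : sig (f + g) = sig f + sig g := map_add sigAddHom f g

theorem sig_sub (f g : NCSPoly n) : sig (f - g) = sig f - sig g := map_sub sigAddHom f g

theorem sig_sum {ι : Type*} (s : Finset ι) (f : ι → NCSPoly n) :
    sig (∑ i ∈ s, f i) = ∑ i ∈ s, sig (f i) := map_sum sigAddHom f s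

theorem sig_single (w : Word n) (c : SPoly n) :
    sig (MonoidAlgebra.single w c) = c * sigWordL (FreeMonoid.toList w) := by
  unfold sig; rw [MonoidAlgebra.coeff_single]; exact Finsupp.sum_single_index (zero_mul _)

noncomputable def ncStarAddHom : NCSPoly n →+ NCSPoly n where
  toFun := ncStar
  map_zero' := by unfold ncStar; rw [MonoidAlgebra.coeff_zero, Finsupp.mapDomain_zero]; rfl
  map_add' f g := by
    unfold ncStar
    rw [MonoidAlgebra.coeff_add, Finsupp.mapDomain_add, MonoidAlgebra.ofCoeff_add]

theorem ncStar_zero : ncStar (0 : NCSPoly n) = 0 := map_zero ncStarAddHom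

theorem ncStar_add (f g : NCSPoly n) : ncStar (f + g) = ncStar f + ncStar g :=
  map_add ncStarAddHom f g

theorem ncStar_sub (f g : NCSPoly n) : ncStar (f - g) = ncStar f - ncStar g :=
  map_sub ncStarAddHom f g

theorem ncStar_single (w : Word n) (c : SPoly n) :
    ncStar (MonoidAlgebra.single w c) = MonoidAlgebra.single (wordRev w) c := by
  unfold ncStar; rw [MonoidAlgebra.coeff_single, Finsupp.mapDomain_single]; rfl

theorem ncStar_mul (f g : NCSPoly n) : ncStar (f * g) = ncStar g * ncStar f := by
  induction f using MonoidAlgebra.induction_linear with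
  | zero => rw [zero_mul, ncStar_zero, mul_zero]
  | add f₁ f₂ h₁ h₂ => rw [add_mul, ncStar_add, h₁, h₂, ncStar_add, mul_add]
  | single a b =>
    induction g using MonoidAlgebra.induction_linear with
    | zero => rw [mul_zero, ncStar_zero, zero_mul]
    | add g₁ g₂ h₁ h₂ => rw [mul_add, ncStar_add, h₁, h₂, ncStar_add, add_mul]
    | single a' b' =>
      rw [MonoidAlgebra.single_mul_single, ncStar_single, ncStar_single, ncStar_single,
        MonoidAlgebra.single_mul_single, mul_comm b b']
      exact congrArg₂ _ FreeMonoid.reverse_mul rfl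

noncomputable def ncWord (l : List (Fin n)) : NCSPoly n :=
  MonoidAlgebra.single (FreeMonoid.ofList l) 1

theorem ncWord_mul (u v : List (Fin n)) : ncWord u * ncWord v = ncWord (u ++ v) := by
  rw [ncWord, ncWord, ncWord, MonoidAlgebra.single_mul_single, mul_one,
    FreeMonoid.ofList_append]

theorem ncStar_ncWord (l : List (Fin n)) : ncStar (ncWord l) = ncWord l.reverse :=
  ncStar_single _ _

theorem sig_ncWord (l : List (Fin n)) : sig (ncWord l) = sigWordL l := by
  rw [ncWord, sig_single, one_mul, FreeMonoid.toList_ofList]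

theorem sigWordL_nil : sigWordL ([] : List (Fin n)) = 1 := dif_pos rfl

theorem sigWordL_reverse (l : List (Fin n)) : sigWordL l.reverse = sigWordL l := by
  rcases eq_or_ne l [] with rfl | hl
  · rfl
  · rw [sigWordL, sigWordL, dif_neg (List.reverse_ne_nil_iff.2 hl), dif_neg hl]
    exact congrArg X (Quotient.sound (Or.inr rfl))

theorem IsFreePoly.add {f g : NCSPoly n} (hf : IsFreePoly f) (hg : IsFreePoly g) :
    IsFreePoly (f + g) := fun w => by
  obtain ⟨r, hr⟩ := hf w
  obtain ⟨s, hs⟩ := hg w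
  exact ⟨r + s, by rw [MonoidAlgebra.coeff_add, Finsupp.add_apply, hr, hs, map_add]⟩

theorem IsFreePoly.sub {f g : NCSPoly n} (hf : IsFreePoly f) (hg : IsFreePoly g) :
    IsFreePoly (f - g) := fun w => by
  obtain ⟨r, hr⟩ := hf w
  obtain ⟨s, hs⟩ := hg w
  exact ⟨r - s, by rw [MonoidAlgebra.coeff_sub, Finsupp.sub_apply, hr, hs, map_sub]⟩

theorem IsFreePoly.mul {f g : NCSPoly n} (hf : IsFreePoly f) (hg : IsFreePoly g) :
    IsFreePoly (f * g) := fun w => by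
  classical
  suffices (f * g).coeff w ∈ (C : ℝ →+* SPoly n).range from (RingHom.mem_range.1 this).imp
    fun _ => Eq.symm
  rw [MonoidAlgebra.coeff_mul]
  refine Subring.sum_mem _ fun a _ => Subring.sum_mem _ fun b _ => ?_
  dsimp only
  split_ifs
  · obtain ⟨r, hr⟩ := hf a
    obtain ⟨s, hs⟩ := hg b
    rw [hr, hs]
    exact Subring.mul_mem _ ⟨r, rfl⟩ ⟨s, rfl⟩
  · exact Subring.zero_mem _

theorem isFreePoly_ncWord (l : List (Fin n)) : IsFreePoly (ncWord l) := fun w => by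
  classical
  by_cases h : FreeMonoid.ofList l = w
  · exact ⟨1, by rw [ncWord, MonoidAlgebra.coeff_single, h, Finsupp.single_eq_same, map_one]⟩
  · exact ⟨0, by
      rw [ncWord, MonoidAlgebra.coeff_single, Finsupp.single_eq_of_ne (Ne.symm h), map_zero]⟩

end NCAlgebra

section Archimedean

variable {K : Set (NCSPoly n)}

theorem sig_conj_mem_QM {p c : NCSPoly n} (hp : IsFreePoly p) (hc : c ∈ insert 1 K) :
    sig (p * c * ncStar p) ∈ QM (Csig K) :=
  QM.subset ⟨p, hp, c, hc, rfl⟩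

theorem sigWordL_append_reverse_mem_QM (u : List (Fin n)) :
    sigWordL (u ++ u.reverse) ∈ QM (Csig K) := by
  simpa only [mul_one, ncStar_ncWord, ncWord_mul, sig_ncWord] using
    sig_conj_mem_QM (K := K) (isFreePoly_ncWord u) (Set.mem_insert 1 K)

theorem sig_conj_sum_mem_QM {m : ℕ} {p c : Fin m → NCSPoly n} (hp : ∀ i, IsFreePoly (p i))
    (hc : ∀ i, c i ∈ insert 1 K) (u : List (Fin n)) :
    sig (ncWord u * (∑ i, p i * c i * ncStar (p i)) * ncWord u.reverse) ∈ QM (Csig K) := by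
  rw [Finset.mul_sum, Finset.sum_mul, sig_sum]
  refine QM.sum_mem _ fun i _ => ?_
  convert sig_conj_mem_QM ((isFreePoly_ncWord u).mul (hp i)) (hc i) using 2
  rw [ncStar_mul, ncStar_ncWord]
  simp only [mul_assoc]

theorem sig_conj_ncConst (u : List (Fin n)) (r : ℝ) :
    sig (ncWord u * ncConst r * ncWord u.reverse) = C r * sigWordL (u ++ u.reverse) := by
  rw [ncConst, iotaS, ncWord, ncWord, MonoidAlgebra.single_mul_single,
    MonoidAlgebra.single_mul_single, mul_one, one_mul, mul_one, ← FreeMonoid.ofList_append,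
    sig_single, FreeMonoid.toList_ofList]

theorem sig_conj_ncX_sq (u : List (Fin n)) (j : Fin n) :
    sig (ncWord u * ncX j ^ 2 * ncWord u.reverse)
      = sigWordL (u ++ [j] ++ (u ++ [j]).reverse) := by
  rw [pow_two, show ncX j = ncWord [j] from rfl, ncWord_mul, ncWord_mul, ncWord_mul, sig_ncWord]
  simp

theorem exists_sigWordL_append_reverse_bound (hab : AlgBounded K) :
    ∃ N : ℝ, 0 < N ∧ ∀ v : List (Fin n),
      C (N ^ v.length) - sigWordL (v ++ v.reverse) ∈ QM (Csig K) := by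
  obtain ⟨N, hN, m, p, c, hp, hc, hcert⟩ := hab
  have step (u : List (Fin n)) : C N * sigWordL (u ++ u.reverse)
      - ∑ j, sigWordL (u ++ [j] ++ (u ++ [j]).reverse) ∈ QM (Csig K) := by
    have h := sig_conj_sum_mem_QM hp
      (fun i => Set.mem_insert_iff.2 ((hc i).imp_right And.left)) u
    rwa [← hcert, mul_sub, sub_mul, sig_sub, Finset.mul_sum, Finset.sum_mul, sig_sum,
      sig_conj_ncConst, Finset.sum_congr rfl fun j _ => sig_conj_ncX_sq u j] at h
  refine ⟨N, hN, fun v => ?_⟩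
  induction v using List.reverseRecOn with
  | nil => simpa [sigWordL_nil] using QM.zero_mem
  | append_singleton u j ih =>
    -- the squares `ς(u xⱼ' xⱼ' u⋆)`, `j' ≠ j`, are dropped from `step u`
    have hrest := QM.sum_mem (Finset.univ.erase j) fun j' _ =>
      sigWordL_append_reverse_mem_QM (K := K) (u ++ [j'])
    convert QM.add_mem (QM.C_mul_mem hN.le ih) (QM.add_mem (step u) hrest) using 1
    rw [← Finset.add_sum_erase _ _ (Finset.mem_univ j), List.length_append,
      List.length_singleton, pow_succ, map_mul]
    ring

theorem qmBounded_sigWordL (hab : AlgBounded K) (l : List (Fin n)) :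
    QMBounded (Csig K) (sigWordL l) := by
  obtain ⟨N, hN, hbound⟩ := exists_sigWordL_append_reverse_bound hab
  have hplus : C (1 + N ^ l.length) + 2 * sigWordL l ∈ QM (Csig K) := by
    convert QM.add_mem (hbound l) (sig_conj_mem_QM (K := K)
      ((isFreePoly_ncWord []).add (isFreePoly_ncWord l)) (Set.mem_insert 1 K)) using 1
    simp only [mul_one, ncStar_add, ncStar_ncWord, add_mul, mul_add, ncWord_mul, sig_add,
      sig_ncWord, sigWordL_reverse, List.nil_append, List.append_nil, List.reverse_nil,
      sigWordL_nil]
    rw [map_add, map_one]; ring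
  have hminus : C (1 + N ^ l.length) - 2 * sigWordL l ∈ QM (Csig K) := by
    convert QM.add_mem (hbound l) (sig_conj_mem_QM (K := K)
      ((isFreePoly_ncWord []).sub (isFreePoly_ncWord l)) (Set.mem_insert 1 K)) using 1
    simp only [mul_one, ncStar_sub, ncStar_ncWord, sub_mul, mul_sub, ncWord_mul, sig_sub,
      sig_ncWord, sigWordL_reverse, List.nil_append, List.append_nil, List.reverse_nil,
      sigWordL_nil]
    rw [map_add, map_one]; ring
  have htwice : QMBounded (Csig K) (2 * sigWordL l) :=
    ⟨1 + N ^ l.length, by positivity, hplus, hminus⟩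
  convert htwice.C_mul (r := 2⁻¹) (by norm_num) using 1
  rw [← mul_assoc, ← map_ofNat C 2, ← map_mul]
  norm_num

theorem qmBounded_X (hab : AlgBounded K) (q : SW n) : QMBounded (Csig K) (X q) := by
  induction q using Quotient.ind with
  | _ l => simpa only [sigWordL, dif_neg l.2] using qmBounded_sigWordL hab l.1

end Archimedean

theorem statement_7_general (n : ℕ) (C : Set (NCSPoly n))
    (hab : AlgBounded C) (f : SPoly n) :
    ∃ m : ℝ, 0 < m ∧ MvPolynomial.C m + f ∈ QM (Csig C) ∧
      MvPolynomial.C m - f ∈ QM (Csig C) := by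
  have hf : f ∈ qmBoundedSubalgebra (Csig C) := by
    rw [qmBoundedSubalgebra_eq_top (qmBounded_X hab)]
    exact Algebra.mem_top
  exact hf

/-- Lemma `l:arch`.
If `C ⊆ 𝐒` is balanced and algebraically bounded, then the quadratic module
`QM(C^ς) ⊆ 𝒮` is archimedean: for every `f ∈ 𝒮` there is `m > 0` with
`m + f ∈ QM(C^ς)` and `m − f ∈ QM(C^ς)`. -/
theorem statement_7 (n : ℕ) (hn : 1 ≤ n) (C : Set (NCSPoly n))
    (hbal : Balanced C) (hab : AlgBounded C) (f : SPoly n) :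
    ∃ m : ℝ, 0 < m ∧ MvPolynomial.C m + f ∈ QM (Csig C) ∧
      MvPolynomial.C m - f ∈ QM (Csig C) :=
  statement_7_general n C hab f

end StatePoly
end
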